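/- Let X be exponential with mean λ and V exponential with mean P ≤ λ, with V independent of Y, where Y has law μ_Y = (P/λ)·δ₀ + (1 − P/λ)·Exp(λ). Then Y + V is exponential with mean λ. -/
import Mathlib

open MeasureTheory ProbabilityTheory Real Set
open scoped ENNReal

lemma my_conv_withDensity (μ : Measure ℝ) [SFinite μ] {g : ℝ → ℝ≥0∞} (hg : Measurable g) :
    μ.conv (volume.withDensity g)
      = volume.withDensity (fun y => ∫⁻ x, g (y - x) ∂μ) := by
  ext s hs
  have hadd : Measurable fun p : ℝ × ℝ => p.1 + p.2 := measurable_fst.add measurable_snd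
  rw [Measure.conv, Measure.map_apply hadd hs, Measure.prod_apply (hadd hs)]
  have key : ∀ x : ℝ, (volume.withDensity g) (Prod.mk x ⁻¹' ((fun p : ℝ × ℝ => p.1 + p.2) ⁻¹' s))
      = ∫⁻ y, s.indicator (fun _ => (1 : ℝ≥0∞)) y * g (y - x) := by
    intro x
    have hpre : MeasurableSet ((fun y : ℝ => x + y) ⁻¹' s) := hs.preimage (measurable_const_add x)
    have h1 : Prod.mk x ⁻¹' ((fun p : ℝ × ℝ => p.1 + p.2) ⁻¹' s) = (fun y : ℝ => x + y) ⁻¹' s := rfl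
    rw [h1, withDensity_apply _ hpre, ← lintegral_indicator hpre g]
    have h2 : ∀ y : ℝ, ((fun y : ℝ => x + y) ⁻¹' s).indicator g y
        = (fun z => s.indicator (fun _ => (1 : ℝ≥0∞)) z * g (z - x)) (y + x) := by
      intro y
      by_cases h : x + y ∈ s
      · have h' : y + x ∈ s := by rwa [add_comm]
        simp [indicator, mem_preimage, h, h', add_sub_cancel_right]
      · have h' : y + x ∉ s := by rwa [add_comm]
        simp [indicator, mem_preimage, h, h', add_sub_cancel_right]
    simp_rw [h2]
    exact lintegral_add_right_eq_self (fun z => s.indicator (fun _ => (1 : ℝ≥0∞)) z * g (z - x)) x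
  simp_rw [key]
  rw [lintegral_lintegral_swap]
  · have h3 : ∀ y : ℝ, ∫⁻ x, s.indicator (fun _ => (1 : ℝ≥0∞)) y * g (y - x) ∂μ
        = s.indicator (fun z => ∫⁻ x, g (z - x) ∂μ) y := by
      intro y
      by_cases h : y ∈ s
      · simp [indicator_of_mem h]
      · simp [indicator_of_notMem h]
    simp_rw [h3]
    rw [lintegral_indicator hs _, withDensity_apply _ hs]
  · exact (((measurable_const.indicator hs).comp measurable_snd).mul
      (hg.comp (measurable_snd.sub measurable_fst))).aemeasurable

lemma my_expPDFReal_eq (r x : ℝ) :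
    exponentialPDFReal r x = if 0 ≤ x then r * rexp (-(r * x)) else 0 := by
  rw [exponentialPDFReal, gammaPDFReal]
  simp only [rpow_one, Real.Gamma_one, div_one, sub_self, rpow_zero, mul_one]

lemma my_measurable_expPDF (r : ℝ) : Measurable (exponentialPDF r) :=
  (measurable_exponentialPDFReal r).ennreal_ofReal

lemma my_density_eq (lam P : ℝ) (hP : 0 < P) (hPlam : P ≤ lam) (y : ℝ) :
    ENNReal.ofReal (P / lam) * exponentialPDF (1 / P) y
      + ENNReal.ofReal (1 - P / lam)
        * (∫⁻ x, exponentialPDF (1 / lam) x * exponentialPDF (1 / P) (y - x))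
    = exponentialPDF (1 / lam) y := by
  have hlam : 0 < lam := hP.trans_le hPlam
  rcases lt_or_ge y 0 with hy | hy
  · have hz : ∀ x : ℝ, exponentialPDF (1 / lam) x * exponentialPDF (1 / P) (y - x) = 0 := by
      intro x
      rcases lt_or_ge x 0 with h | h
      · rw [exponentialPDF_of_neg h, zero_mul]
      · rw [exponentialPDF_of_neg (by linarith : y - x < 0), mul_zero]
    rw [exponentialPDF_of_neg hy, exponentialPDF_of_neg hy]
    simp only [hz, lintegral_zero, mul_zero, zero_add, add_zero]
  · rcases eq_or_lt_of_le hPlam with heq | hlt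
    · subst heq
      simp [div_self hP.ne']
    · -- P < lam
      have hβα : (0:ℝ) < 1 / P - 1 / lam := by
        rw [sub_pos]
        exact one_div_lt_one_div_of_lt hP hlt
      set d : ℝ := 1 / P - 1 / lam with hd
      set G : ℝ → ℝ := fun x => (1 / lam) * rexp (-((1 / lam) * x))
          * ((1 / P) * rexp (-((1 / P) * (y - x)))) with hGdef
      have hGcont : Continuous G := by fun_prop
      have h1 : ∀ x, exponentialPDF (1 / lam) x * exponentialPDF (1 / P) (y - x)
          = ENNReal.ofReal ((Set.Icc 0 y).indicator G x) := by
        intro x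
        by_cases hx : x ∈ Set.Icc 0 y
        · rw [exponentialPDF_of_nonneg hx.1,
            exponentialPDF_of_nonneg (by linarith [hx.2] : (0:ℝ) ≤ y - x),
            Set.indicator_of_mem hx, ← ENNReal.ofReal_mul (by positivity)]
        · rw [Set.indicator_of_notMem hx, ENNReal.ofReal_zero]
          rcases lt_or_ge x 0 with h | h
          · rw [exponentialPDF_of_neg h, zero_mul]
          · have hxy : y < x := by
              by_contra hc
              push_neg at hc
              exact hx ⟨h, hc⟩
            rw [exponentialPDF_of_neg (by linarith : y - x < 0), mul_zero]
      have hFint : Integrable ((Set.Icc 0 y).indicator G) :=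
        (hGcont.integrableOn_Icc).integrable_indicator measurableSet_Icc
      have hFnn : 0 ≤ᵐ[volume] (Set.Icc 0 y).indicator G :=
        Filter.Eventually.of_forall fun x =>
          Set.indicator_nonneg (fun a _ => by positivity) x
      have hI : (∫⁻ x, exponentialPDF (1 / lam) x * exponentialPDF (1 / P) (y - x))
          = ENNReal.ofReal (∫ x, (Set.Icc 0 y).indicator G x) := by
        simp_rw [h1]
        rw [← ofReal_integral_eq_lintegral_ofReal hFint hFnn]
      set c : ℝ := (1 / lam) * (1 / P) * rexp (-((1 / P) * y)) with hc
      have hG : ∀ x, G x = c * rexp (x * d) := by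
        intro x
        have e : rexp (-((1 / lam) * x)) * rexp (-((1 / P) * (y - x)))
            = rexp (-((1 / P) * y)) * rexp (x * d) := by
          rw [← Real.exp_add, ← Real.exp_add, hd]
          ring_nf
        calc G x = (1 / lam) * (1 / P) * (rexp (-((1 / lam) * x))
              * rexp (-((1 / P) * (y - x)))) := by rw [hGdef]; ring
          _ = c * rexp (x * d) := by rw [e, hc]; ring
      have hint : (∫ x, (Set.Icc 0 y).indicator G x)
          = c * (d⁻¹ * (rexp (y * d) - 1)) := by
        rw [MeasureTheory.integral_indicator measurableSet_Icc,
          MeasureTheory.integral_Icc_eq_integral_Ioc,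
          ← intervalIntegral.integral_of_le hy]
        simp_rw [hG]
        rw [intervalIntegral.integral_const_mul,
          intervalIntegral.integral_comp_mul_right rexp hβα.ne']
        simp [smul_eq_mul]
      rw [hI, hint, exponentialPDF_of_nonneg hy, exponentialPDF_of_nonneg hy]
      have hnn1 : (0:ℝ) ≤ P / lam := by positivity
      have hnn2 : (0:ℝ) ≤ 1 - P / lam := by
        rw [sub_nonneg, div_le_one hlam]
        exact hPlam
      have h1' : (1:ℝ) ≤ rexp (y * d) := by
        rw [← Real.exp_zero]
        exact Real.exp_le_exp.2 (by positivity)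
      have hVnn : (0:ℝ) ≤ c * (d⁻¹ * (rexp (y * d) - 1)) :=
        mul_nonneg (le_of_lt (by rw [hc]; positivity))
          (mul_nonneg (inv_nonneg.2 hβα.le) (by linarith))
      rw [← ENNReal.ofReal_mul hnn1, ← ENNReal.ofReal_mul hnn2,
        ← ENNReal.ofReal_add (by positivity) (by positivity)]
      congr 1
      have key : rexp (-((1 / P) * y)) * rexp (y * d) = rexp (-((1 / lam) * y)) := by
        rw [← Real.exp_add, hd]
        ring_nf
      have hPd : P * d = 1 - P / lam := by
        rw [hd]
        field_simp
      set E1 := rexp (-(1 / P * y)) with hE1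
      set E2 := rexp (y * d) with hE2
      rw [← key, ← hPd, hc]
      field_simp
      ring

/-- If Y has law (P/λ)·δ₀ + (1 − P/λ)·Exp(mean λ) and V ~ Exp(mean P) is
independent of Y, with 0 < P ≤ λ, then Y + V ~ Exp(mean λ); i.e. the convolution of the
mixture with Exp(mean P) is Exp(mean λ). (`expMeasure r` has rate r, i.e. mean 1/r.) -/
theorem mixture_conv_exponential (lam P : ℝ) (hP : 0 < P) (hPlam : P ≤ lam) :
    Measure.conv
      ((ENNReal.ofReal (P / lam)) • Measure.dirac (0 : ℝ)
        + (ENNReal.ofReal (1 - P / lam)) • ProbabilityTheory.expMeasure (1 / lam))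
      (ProbabilityTheory.expMeasure (1 / P))
    = ProbabilityTheory.expMeasure (1 / lam) := by
  have h1P : Measurable (exponentialPDF (1 / P)) := my_measurable_expPDF _
  haveI : SFinite (expMeasure (1 / lam)) :=
    inferInstanceAs (SFinite (volume.withDensity (exponentialPDF (1 / lam))))
  rw [show expMeasure (1 / P) = volume.withDensity (exponentialPDF (1 / P)) from rfl,
    my_conv_withDensity _ h1P,
    show expMeasure (1 / lam) = volume.withDensity (exponentialPDF (1 / lam)) from rfl]
  congr 1
  funext y
  have hmy : Measurable fun x : ℝ => exponentialPDF (1 / P) (y - x) :=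
    h1P.comp (measurable_const.sub measurable_id)
  rw [lintegral_add_measure, lintegral_smul_measure, lintegral_smul_measure,
    lintegral_dirac' _ hmy, sub_zero,
    lintegral_withDensity_eq_lintegral_mul _ (my_measurable_expPDF (1 / lam)) hmy]
  exact my_density_eq lam P hP hPlam y
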